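/- Upper bound on the probability that two given nodes are both isolated in g(n,r,p) (step in the proof of Theorem 9). Fix n ≥ 2, r > 0, and p ∈ (0,1]. Then the probability that both v₁ and v₂ are isolated (each has no incident edges) in g(n,r,p) is at most ∫_{S₀} ∫_{S₀} (1 − ν(B(X,r)) p − ν(B(Y,r)) p + ν(B(X,r) ∩ B(Y,r)) p²)^{n−2} dm(X) dm(Y). -/

import Mathlib

open MeasureTheory Metric Finset

noncomputable section

abbrev Pt : Type := EuclideanSpace ℝ (Fin 2)

def pt (x y : ℝ) : Pt := (WithLp.equiv 2 (Fin 2 → ℝ)).symm ![x, y]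

def S0 : Set Pt := {X | X 0 ∈ Set.Icc (-(1:ℝ)/2) (1/2) ∧ X 1 ∈ Set.Icc (-(1:ℝ)/2) (1/2)}

def gridPt (s : ℕ) (ij : Fin s × Fin s) : Pt :=
  pt (((ij.1 : ℝ) + 1/2) / s - 1/2) (((ij.2 : ℝ) + 1/2) / s - 1/2)

/-- The joint distribution of `n` nodes placed i.i.d. uniformly on `S₀`. -/
def μunif (n : ℕ) : Measure (Fin n → Pt) := Measure.pi fun _ => volume.restrict S0

/-- `ν(F)`: the area (Lebesgue measure) of `F ∩ S₀`. -/
def nu (F : Set Pt) : ℝ := (volume (F ∩ S0)).toReal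

/-- Coverage probability of the random network `g(n, r)`. -/
def pcovRand (n : ℕ) (r : ℝ) : ℝ :=
  (μunif n {ω | ∀ u ∈ S0, ∃ i, dist (ω i) u ≤ r}).toReal

/-- The Bernoulli(p) measure on Bool. -/
def bern (p : ℝ) : Measure Bool :=
  ENNReal.ofReal p • Measure.dirac true + ENNReal.ofReal (1 - p) • Measure.dirac false

/-- Sample space measure for `g(n, r, p)`: node positions are i.i.d. uniform on `S₀`,
and each unordered pair of nodes carries an independent Bernoulli(p) indicator. -/
def μgraph (n : ℕ) (p : ℝ) : Measure ((Fin n → Pt) × (Sym2 (Fin n) → Bool)) :=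
  (Measure.pi fun _ : Fin n => volume.restrict S0).prod
    (Measure.pi fun _ : Sym2 (Fin n) => bern p)

/-- Adjacency in `g(n, r, p)`: nodes `i ≠ j` are joined iff they are within distance `r`
and the pair's Bernoulli indicator equals `true`. -/
def adj (n : ℕ) (r : ℝ) (ω : (Fin n → Pt) × (Sym2 (Fin n) → Bool)) (i j : Fin n) : Prop :=
  i ≠ j ∧ dist (ω.1 i) (ω.1 j) ≤ r ∧ ω.2 s(i, j) = true

/-- Probability that `g(n, r, p)` is disconnected. -/
def pdisc (n : ℕ) (r p : ℝ) : ℝ :=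
  (μgraph n p {ω | ¬ ∀ i j : Fin n, Relation.ReflTransGen (adj n r ω) i j}).toReal

/-!
Forgetting the edge between `v₁` and `v₂` only enlarges the event: it remains that none of the
pairs `{vᵢ, vₖ}` (`i = 1, 2`, `k ≥ 3`) with `d(Xᵢ, Xₖ) ≤ r` carries an edge. These `2(n - 2)` pairs
are distinct, so given the positions their Bernoulli variables are independent and the event has
conditional probability `∏ₖ q(X₁, Xₖ) q(X₂, Xₖ)`, where `q(u, v) = 1 - p·1[d(u, v) ≤ r]`. The
positions `Xₖ`, `k ≥ 3`, are i.i.d. uniform, so integrating them out gives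
`(∫_{S₀} q(X₁, z) q(X₂, z) dz) ^ (n - 2)`, and expanding `q(X₁, z) q(X₂, z)` into indicators of
`B(X₁, r)`, `B(X₂, r)` and their intersection turns the inner integral into
`1 - ν(B(X₁, r)) p - ν(B(X₂, r)) p + ν(B(X₁, r) ∩ B(X₂, r)) p²`.
-/

open scoped ENNReal

section PiMeasure

variable {ι κ α : Type*} [Fintype ι] [Fintype κ] [MeasurableSpace α]

theorem measure_pi_setOf_forall_comp_mem (μ : ι → Measure α) [∀ i, IsProbabilityMeasure (μ i)]
    {f : κ → ι} (hf : Function.Injective f) (C : κ → Set α) :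
    Measure.pi μ {b | ∀ k, b (f k) ∈ C k} = ∏ k, μ (f k) (C k) := by
  have hbox : {b : ι → α | ∀ k, b (f k) ∈ C k} =
      Set.univ.pi fun i => {a | ∀ k, f k = i → a ∈ C k} := by
    ext b
    simp only [Set.mem_ofPred_eq, Set.mem_univ_pi]
    exact ⟨fun h i k hk => hk ▸ h k, fun h k => h (f k) k rfl⟩
  rw [hbox, Measure.pi_pi]
  refine (Fintype.prod_of_injective f hf _ _ (fun i hi => ?_) fun k => ?_).symm
  · have : {a | ∀ k, f k = i → a ∈ C k} = Set.univ :=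
      Set.eq_univ_of_forall fun a k hk => absurd ⟨k, hk⟩ hi
    rw [this, measure_univ]
  · congr 1
    ext a
    exact ⟨fun ha k' hk' => hf hk' ▸ ha, fun ha => ha k rfl⟩

theorem lintegral_pi_prod_eq_pow (μ : Measure α) [IsProbabilityMeasure μ] {g : α → ℝ≥0∞}
    (hg : Measurable g) :
    ∫⁻ z : ι → α, ∏ i, g (z i) ∂Measure.pi (fun _ => μ) = (∫⁻ a, g a ∂μ) ^ Fintype.card ι := by
  rw [ProbabilityTheory.lintegral_prod_eq_prod_lintegral_of_indepFun _ _
    (ProbabilityTheory.iIndepFun_pi fun _ => hg.aemeasurable)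
    fun i => hg.comp (measurable_pi_apply i)]
  simp_rw [(measurePreserving_eval (fun _ => μ) _).lintegral_comp hg]
  rw [Finset.prod_const, Finset.card_univ]

theorem lintegral_pi_fin_succ {n : ℕ} (μ : Measure α) [SigmaFinite μ]
    {F : (Fin (n + 1) → α) → ℝ≥0∞} (hF : Measurable F) :
    ∫⁻ x, F x ∂Measure.pi (fun _ => μ) =
      ∫⁻ a, ∫⁻ y, F (Fin.cons a y) ∂Measure.pi (fun _ => μ) ∂μ := by
  have e := (measurePreserving_piFinSuccAbove (fun _ : Fin (n + 1) => μ) 0).symm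
  rw [← e.lintegral_comp hF]
  refine (lintegral_prod _ (hF.comp e.measurable).aemeasurable).trans ?_
  simp [MeasurableEquiv.piFinSuccAbove_symm_apply, Fin.insertNthEquiv, Fin.insertNth_zero']

theorem lintegral_pi_fin_add_two_prod (μ : Measure α) [IsProbabilityMeasure μ] {m : ℕ}
    {f : α → α → α → ℝ≥0∞}
    (hf : Measurable fun w : α × α × α => f w.1 w.2.1 w.2.2) :
    ∫⁻ x : Fin (m + 2) → α, ∏ k : Fin m, f (x 0) (x 1) (x k.succ.succ) ∂Measure.pi (fun _ => μ) =
      ∫⁻ a, ∫⁻ b, (∫⁻ c, f a b c ∂μ) ^ m ∂μ ∂μ := by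
  rw [lintegral_pi_fin_succ μ ?h₁]
  case h₁ => fun_prop
  refine lintegral_congr fun a => ?_
  simp only [Fin.cons_zero, Fin.cons_one, Fin.cons_succ]
  rw [lintegral_pi_fin_succ μ ?h₂]
  case h₂ => fun_prop
  refine lintegral_congr fun b => ?_
  simp only [Fin.cons_zero, Fin.cons_succ]
  rw [lintegral_pi_prod_eq_pow μ ?h₃, Fintype.card_fin]
  case h₃ => fun_prop

end PiMeasure

theorem toReal_lintegral_lintegral {α β : Type*} [MeasurableSpace α] [MeasurableSpace β]
    {μ : Measure α} {ν : Measure β} [IsFiniteMeasure ν] {F : α → β → ℝ≥0∞}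
    (hF : Measurable (Function.uncurry F)) (hF_le : ∀ a b, F a b ≤ 1) :
    (∫⁻ a, ∫⁻ b, F a b ∂ν ∂μ).toReal = ∫ a, ∫ b, (F a b).toReal ∂ν ∂μ := by
  have hinner (a : α) : ∫⁻ b, F a b ∂ν < ∞ :=
    ((lintegral_mono (hF_le a)).trans_eq (lintegral_one)).trans_lt (measure_lt_top ν _)
  have hm : Measurable fun a => ∫⁻ b, F a b ∂ν := hF.lintegral_prod_right'
  rw [← integral_toReal hm.aemeasurable (ae_of_all _ hinner)]
  refine integral_congr_ae (ae_of_all _ fun a => (integral_toReal ?_ ?_).symm)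
  · exact (hF.comp measurable_prodMk_left).aemeasurable
  · exact ae_of_all _ fun b => (hF_le a b).trans_lt ENNReal.one_lt_top

theorem integral_one_sub_mul_indicator_mul {α : Type*} [MeasurableSpace α] (μ : Measure α)
    [IsProbabilityMeasure μ] {A B : Set α} (hA : MeasurableSet A) (hB : MeasurableSet B) (p : ℝ) :
    ∫ z, (1 - p * A.indicator 1 z) * (1 - p * B.indicator 1 z) ∂μ =
      1 - μ.real A * p - μ.real B * p + μ.real (A ∩ B) * p ^ 2 := by
  have hAB := hA.inter hB
  have hpt (z : α) : (1 - p * A.indicator 1 z) * (1 - p * B.indicator 1 z) =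
      1 - p * A.indicator 1 z - p * B.indicator 1 z + p ^ 2 * (A ∩ B).indicator 1 z := by
    by_cases hzA : z ∈ A <;> by_cases hzB : z ∈ B <;> simp [hzA, hzB]
    ring
  have hint {s : Set α} (hs : MeasurableSet s) : Integrable (s.indicator (1 : α → ℝ)) μ :=
    (integrable_const (1 : ℝ)).indicator hs
  simp_rw [hpt]
  rw [integral_add, integral_sub, integral_sub, integral_const, integral_const_mul,
    integral_const_mul, integral_const_mul, integral_indicator_one hA, integral_indicator_one hB,
    integral_indicator_one hAB]
  · simp only [probReal_univ, smul_eq_mul, mul_one]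
    ring
  all_goals fun_prop (disch := assumption)

theorem volume_S0 : volume S0 = 1 := by
  have h : S0 = (MeasurableEquiv.toLp 2 (Fin 2 → ℝ)).symm ⁻¹'
      (Set.univ.pi fun _ : Fin 2 => Set.Icc (-(1:ℝ)/2) (1/2)) := by
    ext X
    simp only [S0, Set.mem_preimage, Set.mem_univ_pi, Fin.forall_fin_two]
    rfl
  rw [h, (EuclideanSpace.volume_preserving_symm_measurableEquiv_toLp (Fin 2)).measure_preimage
    (MeasurableSet.univ_pi fun _ => measurableSet_Icc).nullMeasurableSet, volume_pi,
    Measure.pi_pi]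
  norm_num [Real.volume_Icc]

instance : IsProbabilityMeasure (volume.restrict S0) :=
  ⟨by rw [Measure.restrict_apply_univ, volume_S0]⟩

theorem isProbabilityMeasure_bern {p : ℝ} (hp0 : 0 ≤ p) (hp1 : p ≤ 1) :
    IsProbabilityMeasure (bern p) :=
  ⟨by simp [bern, ← ENNReal.ofReal_add hp0 (sub_nonneg.2 hp1)]⟩

theorem isProbabilityMeasure_μgraph {p : ℝ} (hp0 : 0 ≤ p) (hp1 : p ≤ 1) (n : ℕ) :
    IsProbabilityMeasure (μgraph n p) := by
  have := isProbabilityMeasure_bern hp0 hp1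
  unfold μgraph
  infer_instance

def nonAdjProb (r p : ℝ) (u v : Pt) : ℝ := if dist u v ≤ r then 1 - p else 1

theorem measurable_nonAdjProb (r p : ℝ) :
    Measurable fun w : Pt × Pt => nonAdjProb r p w.1 w.2 :=
  Measurable.ite (measurableSet_le (by fun_prop) measurable_const) measurable_const
    measurable_const

theorem nonAdjProb_nonneg {p : ℝ} (hp1 : p ≤ 1) (r : ℝ) (u v : Pt) : 0 ≤ nonAdjProb r p u v := by
  unfold nonAdjProb; split_ifs <;> linarith

theorem nonAdjProb_le_one {p : ℝ} (hp0 : 0 ≤ p) (r : ℝ) (u v : Pt) : nonAdjProb r p u v ≤ 1 := by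
  unfold nonAdjProb; split_ifs <;> linarith

theorem bern_setOf_imp_eq_false {p : ℝ} (hp0 : 0 ≤ p) (hp1 : p ≤ 1) (P : Prop) [Decidable P] :
    bern p {β | P → β = false} = ENNReal.ofReal (if P then 1 - p else 1) := by
  have := isProbabilityMeasure_bern hp0 hp1
  by_cases hP : P
  · simp [hP, bern]
  · have : {β : Bool | P → β = false} = Set.univ := Set.eq_univ_of_forall fun _ h => absurd h hP
    rw [this, measure_univ, if_neg hP, ENNReal.ofReal_one]

theorem integral_nonAdjProb_mul (r p : ℝ) (X Y : Pt) :
    ∫ z in S0, nonAdjProb r p X z * nonAdjProb r p Y z =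
      1 - nu (closedBall X r) * p - nu (closedBall Y r) * p +
        nu (closedBall X r ∩ closedBall Y r) * p ^ 2 := by
  have hind (u z : Pt) : nonAdjProb r p u z = 1 - p * (closedBall u r).indicator 1 z := by
    unfold nonAdjProb
    split_ifs with h
    · rw [Set.indicator_of_mem (mem_closedBall'.2 h), Pi.one_apply, mul_one]
    · rw [Set.indicator_of_notMem (mt mem_closedBall'.1 h), mul_zero, sub_zero]
  simp_rw [hind]
  rw [integral_one_sub_mul_indicator_mul _ measurableSet_closedBall measurableSet_closedBall]
  simp only [nu, measureReal_def, Measure.restrict_apply measurableSet_closedBall,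
    Measure.restrict_apply (measurableSet_closedBall.inter measurableSet_closedBall)]

def neitherAdjProb (r p : ℝ) (X Y : Pt) : ℝ≥0∞ :=
  ∫⁻ z in S0, ENNReal.ofReal (nonAdjProb r p X z) * ENNReal.ofReal (nonAdjProb r p Y z)

theorem measurable_neitherAdjProb (r p : ℝ) :
    Measurable fun w : Pt × Pt => neitherAdjProb r p w.1 w.2 := by
  have := measurable_nonAdjProb r p
  have hf : Measurable fun w : (Pt × Pt) × Pt =>
      ENNReal.ofReal (nonAdjProb r p w.1.1 w.2) * ENNReal.ofReal (nonAdjProb r p w.1.2 w.2) := by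
    fun_prop
  exact hf.lintegral_prod_right'

theorem neitherAdjProb_le_one {p : ℝ} (hp0 : 0 ≤ p) (r : ℝ) (X Y : Pt) :
    neitherAdjProb r p X Y ≤ 1 :=
  (lintegral_mono fun z => mul_le_one' (ENNReal.ofReal_le_one.2 (nonAdjProb_le_one hp0 r X z))
    (ENNReal.ofReal_le_one.2 (nonAdjProb_le_one hp0 r Y z))).trans_eq (by simp)

theorem toReal_neitherAdjProb {p : ℝ} (hp0 : 0 ≤ p) (hp1 : p ≤ 1) (r : ℝ) (X Y : Pt) :
    (neitherAdjProb r p X Y).toReal = 1 - nu (closedBall X r) * p - nu (closedBall Y r) * p +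
      nu (closedBall X r ∩ closedBall Y r) * p ^ 2 := by
  have hnonneg (z : Pt) : 0 ≤ nonAdjProb r p X z * nonAdjProb r p Y z :=
    mul_nonneg (nonAdjProb_nonneg hp1 r X z) (nonAdjProb_nonneg hp1 r Y z)
  have hint : Integrable (fun z => nonAdjProb r p X z * nonAdjProb r p Y z)
      (volume.restrict S0) := by
    refine .of_bound (C := 1) ?_ (ae_of_all _ fun z => ?_)
    · have := measurable_nonAdjProb r p
      fun_prop
    · rw [Real.norm_of_nonneg (hnonneg z)]
      exact mul_le_one₀ (nonAdjProb_le_one hp0 r X z) (nonAdjProb_nonneg hp1 r Y z)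
        (nonAdjProb_le_one hp0 r Y z)
  rw [neitherAdjProb]
  simp_rw [← ENNReal.ofReal_mul (nonAdjProb_nonneg hp1 r X _)]
  rw [← ofReal_integral_eq_lintegral_ofReal hint (ae_of_all _ hnonneg),
    ENNReal.toReal_ofReal (integral_nonneg hnonneg), integral_nonAdjProb_mul]

theorem measurableSet_setOf_adj (n : ℕ) (r : ℝ) (i j : Fin n) :
    MeasurableSet {ω | adj n r ω i j} := by
  simp only [adj, Set.ofPred_and]
  exact (MeasurableSet.const _).inter ((measurableSet_le (by fun_prop) measurable_const).inter
    (measurableSet_eq_fun (by fun_prop) measurable_const))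

def firstTwoIsolatedFromRest (m : ℕ) (r : ℝ) :
    Set ((Fin (m + 2) → Pt) × (Sym2 (Fin (m + 2)) → Bool)) :=
  {ω | ∀ k : Fin m, ∀ i : Fin 2, ¬ adj (m + 2) r ω (Fin.castLE (by omega) i) k.succ.succ}

theorem measurableSet_firstTwoIsolatedFromRest (m : ℕ) (r : ℝ) :
    MeasurableSet (firstTwoIsolatedFromRest m r) := by
  simp only [firstTwoIsolatedFromRest, Set.ofPred_forall]
  exact .iInter fun k => .iInter fun i => (measurableSet_setOf_adj _ _ _ _).compl

theorem injective_castLE_sym2_succ_succ (m : ℕ) :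
    Function.Injective fun ki : Fin m × Fin 2 =>
      s(Fin.castLE (by omega : 2 ≤ m + 2) ki.2, ki.1.succ.succ) := by
  rintro ⟨k, i⟩ ⟨k', i'⟩ h
  have := i.isLt
  have := i'.isLt
  simp only [Sym2.eq_iff, Fin.ext_iff, Fin.val_castLE, Fin.val_succ] at h
  simp only [Prod.mk.injEq, Fin.ext_iff]
  omega

theorem measure_pi_bern_firstTwoIsolatedFromRest {p : ℝ} (hp0 : 0 ≤ p) (hp1 : p ≤ 1) (m : ℕ)
    (r : ℝ) (x : Fin (m + 2) → Pt) :
    Measure.pi (fun _ => bern p) (Prod.mk x ⁻¹' firstTwoIsolatedFromRest m r) =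
      ∏ k : Fin m, ENNReal.ofReal (nonAdjProb r p (x 0) (x k.succ.succ)) *
        ENNReal.ofReal (nonAdjProb r p (x 1) (x k.succ.succ)) := by
  have := isProbabilityMeasure_bern hp0 hp1
  let node (i : Fin 2) : Fin (m + 2) := Fin.castLE (by omega) i
  have hsection : Prod.mk x ⁻¹' firstTwoIsolatedFromRest m r =
      {b | ∀ ki : Fin m × Fin 2, b s(node ki.2, ki.1.succ.succ) ∈
        {β | dist (x (node ki.2)) (x ki.1.succ.succ) ≤ r → β = false}} := by
    ext b
    simp only [firstTwoIsolatedFromRest, adj, Set.mem_preimage, Set.mem_ofPred_eq, Prod.forall]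
    refine forall_congr' fun k => forall_congr' fun i => ?_
    have hne : node i ≠ k.succ.succ := by
      simp only [node, ne_eq, Fin.ext_iff, Fin.val_castLE, Fin.val_succ]
      omega
    simp [node, hne]
  rw [hsection, measure_pi_setOf_forall_comp_mem _ (injective_castLE_sym2_succ_succ m),
    Fintype.prod_prod_type]
  refine Finset.prod_congr rfl fun k _ => ?_
  simp only [Fin.prod_univ_two, bern_setOf_imp_eq_false hp0 hp1]
  rfl

theorem μgraph_firstTwoIsolatedFromRest {p : ℝ} (hp0 : 0 ≤ p) (hp1 : p ≤ 1) (m : ℕ) (r : ℝ) :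
    μgraph (m + 2) p (firstTwoIsolatedFromRest m r) =
      ∫⁻ X in S0, ∫⁻ Y in S0, neitherAdjProb r p X Y ^ m := by
  rw [μgraph, Measure.prod_apply (measurableSet_firstTwoIsolatedFromRest m r)]
  simp_rw [measure_pi_bern_firstTwoIsolatedFromRest hp0 hp1]
  refine lintegral_pi_fin_add_two_prod (volume.restrict S0)
    (f := fun X Y z => ENNReal.ofReal (nonAdjProb r p X z) * ENNReal.ofReal (nonAdjProb r p Y z)) ?_
  have := measurable_nonAdjProb r p
  fun_prop

/-- Step in the proof of Theorem 9: the probability that nodes `v₁` and `v₂` are both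
isolated in `g(n, r, p)` is at most the stated double integral. -/
theorem two_isolated_nodes_probability_upper_bound
    (n : ℕ) (hn : 2 ≤ n) (r : ℝ) (p : ℝ) (hp : p ∈ Set.Ioc (0:ℝ) 1) :
    (μgraph n p {ω |
        (∀ j : Fin n, j ≠ ⟨0, by omega⟩ → ¬ adj n r ω ⟨0, by omega⟩ j) ∧
        (∀ j : Fin n, j ≠ ⟨1, by omega⟩ → ¬ adj n r ω ⟨1, by omega⟩ j)}).toReal ≤
      ∫ X in S0, ∫ Y in S0,
        (1 - nu (closedBall X r) * p - nu (closedBall Y r) * p +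
          nu (closedBall X r ∩ closedBall Y r) * p ^ 2) ^ (n - 2) := by
  obtain ⟨hp0, hp1⟩ := hp
  obtain ⟨m, rfl⟩ : ∃ m, n = m + 2 := ⟨n - 2, by omega⟩
  have := isProbabilityMeasure_μgraph hp0.le hp1 (m + 2)
  calc _ ≤ (μgraph (m + 2) p (firstTwoIsolatedFromRest m r)).toReal := by
        refine ENNReal.toReal_mono (measure_ne_top _ _) (measure_mono fun ω hω k i => ?_)
        fin_cases i
        exacts [hω.1 _ (Fin.succ_ne_zero _), hω.2 _ (Fin.succ_succ_ne_one _)]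
    _ = ∫ X in S0, ∫ Y in S0, (neitherAdjProb r p X Y ^ m).toReal := by
        rw [μgraph_firstTwoIsolatedFromRest hp0.le hp1, toReal_lintegral_lintegral
          ((measurable_neitherAdjProb r p).pow_const m)
          fun X Y => pow_le_one' (neitherAdjProb_le_one hp0.le r X Y) m]
    _ = _ := by simp only [ENNReal.toReal_pow, toReal_neitherAdjProb hp0.le hp1, Nat.add_sub_cancel]
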